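/- arXiv:1406.7591 — 2 statements merged into one kernel-verified Lean document; each statement's English description precedes it below -/
import Mathlib

section
/- Let K be the simplicial complex on {1,…,8} from Construction 3.1 (with the eighteen maximal 3-simplices listed). For the subset I = (1,2,3,4), the full subcomplex K_I has missing faces exactly {(1,2,3), (1,3,4)}, and its geometric realization is homotopy equivalent to the circle S¹; in particular H̃¹(K_I; ℤ) ≅ ℤ and H̃⁰(K_I; ℤ) = 0. -/
namespace Paper

/-- A finite abstract simplicial complex on an ambient type `V`, with a specified
vertex set, containing the empty face and closed under passing to subsets. -/
structure SComplex (V : Type*) where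
  vertexSet : Finset V
  faces : Set (Finset V)
  empty_mem : ∅ ∈ faces
  face_sub : ∀ {s : Finset V}, s ∈ faces → s ⊆ vertexSet
  down_closed : ∀ {s t : Finset V}, s ∈ faces → t ⊆ s → t ∈ faces

namespace SComplex

variable {V : Type*}

/-- The set of missing faces (minimal non-faces) of `K`. -/
def MF (K : SComplex V) : Set (Finset V) :=
  {σ | σ ⊆ K.vertexSet ∧ σ ∉ K.faces ∧ ∀ t ⊂ σ, t ∈ K.faces}

/-- The full subcomplex on a vertex subset `I`. -/
def full (K : SComplex V) (I : Finset V) : SComplex V where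
  vertexSet := I
  faces := {s | s ∈ K.faces ∧ s ⊆ I}
  empty_mem := ⟨K.empty_mem, Finset.empty_subset I⟩
  face_sub := fun hs => hs.2
  down_closed := fun hs hts => ⟨K.down_closed hs.1 hts, hts.trans hs.2⟩

/-- The full simplex on a vertex set `W`. -/
def fullSimplex (W : Finset V) : SComplex V where
  vertexSet := W
  faces := {s | s ⊆ W}
  empty_mem := Finset.empty_subset W
  face_sub := fun hs => hs
  down_closed := fun hs hts => hts.trans hs

/-- The join of two simplicial complexes (on disjoint vertex sets). -/
def join [DecidableEq V] (K L : SComplex V) : SComplex V where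
  vertexSet := K.vertexSet ∪ L.vertexSet
  faces := {s | ∃ a ∈ K.faces, ∃ b ∈ L.faces, s = a ∪ b}
  empty_mem := ⟨∅, K.empty_mem, ∅, L.empty_mem, by rw [Finset.union_empty]⟩
  face_sub := by
    rintro s ⟨a, ha, b, hb, rfl⟩
    exact Finset.union_subset_union (K.face_sub ha) (L.face_sub hb)
  down_closed := by
    rintro s t ⟨a, ha, b, hb, rfl⟩ hts
    refine ⟨t ∩ a, K.down_closed ha Finset.inter_subset_right,
      t ∩ b, L.down_closed hb Finset.inter_subset_right, ?_⟩
    ext x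
    simp only [Finset.mem_union, Finset.mem_inter]
    constructor
    · intro hx
      rcases Finset.mem_union.1 (hts hx) with h | h
      · exact Or.inl ⟨hx, h⟩
      · exact Or.inr ⟨hx, h⟩
    · rintro (⟨h, _⟩ | ⟨h, _⟩) <;> exact h

/-- The join of a finite family of simplicial complexes (on pairwise disjoint
vertex sets). -/
def multiJoin {ι : Type*} [Fintype ι] [DecidableEq V] (K : ι → SComplex V) : SComplex V where
  vertexSet := Finset.univ.sup fun i => (K i).vertexSet
  faces := {s | ∃ t : ι → Finset V, (∀ i, t i ∈ (K i).faces) ∧ s = Finset.univ.sup t}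
  empty_mem := ⟨fun _ => ∅, fun i => (K i).empty_mem, by ext x; simp [Finset.mem_sup]⟩
  face_sub := by
    rintro s ⟨t, ht, rfl⟩
    exact Finset.sup_mono_fun fun i _ => (K i).face_sub (ht i)
  down_closed := by
    rintro s u ⟨t, ht, rfl⟩ hus
    refine ⟨fun i => u ∩ t i, fun i => (K i).down_closed (ht i) Finset.inter_subset_right, ?_⟩
    ext x
    simp only [Finset.mem_sup, Finset.mem_inter]
    constructor
    · intro hx
      rcases Finset.mem_sup.1 (hus hx) with ⟨i, hi, hxi⟩
      exact ⟨i, hi, hx, hxi⟩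
    · rintro ⟨i, _, hx, _⟩
      exact hx

/-- The geometric realization of `K`, as a subspace of `V → ℝ`. -/
def realization (K : SComplex V) : Set (V → ℝ) :=
  {f | (∀ v, 0 ≤ f v) ∧ ∃ s ∈ K.faces, (∀ v ∉ s, f v = 0) ∧ ∑ v ∈ s, f v = 1}

/-- `Γ_I` is (isomorphic to) the boundary of a polygon on the vertex set `I`. -/
def IsPolygonBoundary [DecidableEq V] (K : SComplex V) (I : Finset V) : Prop :=
  3 ≤ I.card ∧ ∃ e : Fin I.card → V, Function.Injective e ∧ (∀ i, e i ∈ I) ∧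
    ∀ s : Finset V, s ∈ (K.full I).faces ↔
      s = ∅ ∨ (∃ i, s = {e i}) ∨
        ∃ i : Fin I.card, s = {e i, e ⟨(i.1 + 1) % I.card, Nat.mod_lt _ i.pos⟩}

/-! ### Reduced simplicial chains, homology and cohomology -/

/-- The group of reduced simplicial `n`-chains: the free abelian group on the
faces of `K` with `n + 1` vertices (`n : ℤ`; `n = -1` corresponds to the empty face). -/
abbrev chainZ (K : SComplex V) (n : ℤ) : Type _ :=
  {σ : Finset V // σ ∈ K.faces ∧ (σ.card : ℤ) = n + 1} →₀ ℤ

/-- Transporting chain groups along an equality of degrees. -/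
noncomputable def chainCast (K : SComplex V) {a b : ℤ} (h : a = b) :
    K.chainZ a ≃ₗ[ℤ] K.chainZ b := by subst h; exact LinearEquiv.refl ℤ _

variable [DecidableEq V] [LinearOrder V]

/-- The boundary of a basis chain. -/
noncomputable def bdryElem (K : SComplex V) (n : ℤ)
    (σ : {σ : Finset V // σ ∈ K.faces ∧ (σ.card : ℤ) = n + 1}) : K.chainZ (n - 1) :=
  ∑ i : Fin σ.1.card,
    ((-1 : ℤ) ^ (i : ℕ)) •
      Finsupp.single
        ⟨σ.1.erase ((σ.1.sort (· ≤ ·)).get (Fin.cast (Finset.length_sort (· ≤ ·)).symm i)), by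
          refine ⟨K.down_closed σ.2.1 (Finset.erase_subset _ _), ?_⟩
          have hm : (σ.1.sort (· ≤ ·)).get (Fin.cast (Finset.length_sort (· ≤ ·)).symm i) ∈ σ.1 :=
            (Finset.mem_sort (· ≤ ·)).1 (List.get_mem _ _)
          rw [Finset.card_erase_of_mem hm]
          have h1 : 0 < σ.1.card := i.pos
          have h2 := σ.2.2
          omega⟩ 1

/-- The simplicial boundary operator on reduced chains. -/
noncomputable def bdry (K : SComplex V) (n : ℤ) : K.chainZ n →ₗ[ℤ] K.chainZ (n - 1) :=
  Finsupp.lsum ℤ fun σ => LinearMap.toSpanSingleton ℤ _ (K.bdryElem n σ)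

/-- Reduced `n`-cycles. -/
noncomputable def cycles (K : SComplex V) (n : ℤ) : Submodule ℤ (K.chainZ n) :=
  LinearMap.ker (K.bdry n)

/-- Reduced `n`-boundaries. -/
noncomputable def bdries (K : SComplex V) (n : ℤ) : Submodule ℤ (K.chainZ n) :=
  (LinearMap.range (K.bdry (n + 1))).map (K.chainCast (by ring)).toLinearMap

/-- The `n`-th reduced simplicial homology group of `K` with `ℤ` coefficients. -/
noncomputable abbrev reducedHomology (K : SComplex V) (n : ℤ) :=
  K.cycles n ⧸ Submodule.comap (K.cycles n).subtype (K.bdries n ⊓ K.cycles n)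

/-- The simplicial coboundary operator on reduced cochains. -/
noncomputable def cobdry (K : SComplex V) (n : ℤ) :
    (K.chainZ n →ₗ[ℤ] ℤ) →ₗ[ℤ] (K.chainZ (n + 1) →ₗ[ℤ] ℤ) :=
  LinearMap.lcomp ℤ ℤ ((K.chainCast (show n + 1 - 1 = n by ring)).toLinearMap.comp (K.bdry (n + 1)))

/-- Reduced `n`-cocycles. -/
noncomputable def cocycles (K : SComplex V) (n : ℤ) : Submodule ℤ (K.chainZ n →ₗ[ℤ] ℤ) :=
  LinearMap.ker (K.cobdry n)

/-- Reduced `n`-coboundaries. -/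
noncomputable def cobdries (K : SComplex V) (n : ℤ) : Submodule ℤ (K.chainZ n →ₗ[ℤ] ℤ) :=
  (LinearMap.range (K.cobdry (n - 1))).map
    ((LinearEquiv.arrowCongr (K.chainCast (show n - 1 + 1 = n by ring))
      (LinearEquiv.refl ℤ ℤ)).toLinearMap)

/-- The `n`-th reduced simplicial cohomology group of `K` with `ℤ` coefficients. -/
noncomputable abbrev reducedCohomology (K : SComplex V) (n : ℤ) :=
  K.cocycles n ⧸ Submodule.comap (K.cocycles n).subtype (K.cobdries n ⊓ K.cocycles n)

/-- The inclusion of the chains of a full subcomplex into the chains of `K`. -/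
noncomputable def chainIncl (K : SComplex V) (I : Finset V) (n : ℤ) :
    (K.full I).chainZ n →ₗ[ℤ] K.chainZ n :=
  Finsupp.lsum ℤ fun σ => LinearMap.toSpanSingleton ℤ _ (Finsupp.single ⟨σ.1, σ.2.1.1, σ.2.2⟩ 1)

/-- Restriction of cochains of `K` to cochains of a full subcomplex. -/
noncomputable def cochainRestrict (K : SComplex V) (I : Finset V) (n : ℤ) :
    (K.chainZ n →ₗ[ℤ] ℤ) →ₗ[ℤ] ((K.full I).chainZ n →ₗ[ℤ] ℤ) :=
  LinearMap.lcomp ℤ ℤ (K.chainIncl I n)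

/-- The oriented edge chain corresponding to an edge `{a, b}` (oriented from `a` to `b`). -/
noncomputable def edgeChain (K : SComplex V) (a b : V) (hab : a ≠ b)
    (h : ({a, b} : Finset V) ∈ K.faces) : K.chainZ 1 :=
  (if a ≤ b then (1 : ℤ) else -1) •
    Finsupp.single ⟨{a, b}, h, by
      rw [Finset.card_insert_of_notMem (by simp [hab]), Finset.card_singleton]; norm_num⟩ 1

end SComplex

end Paper

/-- The eighteen maximal 3-simplices of the polytopal 3-sphere from Construction 3.1. -/
def tetraList : Finset (Finset ℕ) :=
  {{1,2,4,5},{1,2,4,6},{1,2,5,7},{1,2,6,7},{1,3,5,7},{1,3,6,7},{2,3,4,7},{2,3,6,7},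
   {2,4,5,7},{3,4,5,7},{1,4,5,8},{1,4,6,8},{1,3,5,8},{1,3,6,8},{2,3,4,8},{2,3,6,8},
   {2,4,6,8},{3,4,5,8}}

/-- The polytopal 3-sphere `K` of Construction 3.1, on vertex set `{1, ..., 8}`. -/
def Kpaper : Paper.SComplex ℕ where
  vertexSet := {1,2,3,4,5,6,7,8}
  faces := {s | ∃ t ∈ tetraList, s ⊆ t}
  empty_mem := ⟨{1,2,4,5}, by decide, by simp⟩
  face_sub := by
    rintro s ⟨t, ht, hst⟩
    have h : ∀ t ∈ tetraList, t ⊆ ({1,2,3,4,5,6,7,8} : Finset ℕ) := by decide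
    exact hst.trans (h t ht)
  down_closed := by
    rintro s u ⟨t, ht, hst⟩ hus
    exact ⟨t, ht, hus.trans hst⟩


/-!
`K_I` for `I = {1, 2, 3, 4}` consists of the triangles `124`, `234` and the edge `13`; its
missing faces are found by a finite check. Every face containing `4` stays a face when `2` is
added, so sliding the weight of `4` onto `2` deformation retracts `|K_I|` onto the full
subcomplex on `{1, 2, 3}`, the boundary of a triangle, which radial projection from its centre
identifies with `S¹`. The cohomology is computed on simplicial cochains: every vertex is joined
to `1`, so `H̃⁰ = 0`, and evaluation on the cycle `[12] + [23] - [13]` is an isomorphism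
`H̃¹ ≅ ℤ`, because the only relations among `1`-cocycles come from the triangles `124` and `234`.
-/

namespace Paper.SComplex

variable {V : Type*}

def simplexOn (s : Finset V) : Set (V → ℝ) :=
  {f | (∀ v, 0 ≤ f v) ∧ (∀ v ∉ s, f v = 0) ∧ ∑ v ∈ s, f v = 1}

theorem mem_realization_iff {K : SComplex V} {f : V → ℝ} :
    f ∈ K.realization ↔ ∃ s ∈ K.faces, f ∈ simplexOn s := by
  simp only [realization, simplexOn, Set.mem_ofPred_eq]
  constructor
  · rintro ⟨h0, s, hs, hout, hsum⟩
    exact ⟨s, hs, h0, hout, hsum⟩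
  · rintro ⟨s, hs, h0, hout, hsum⟩
    exact ⟨h0, s, hs, hout, hsum⟩

theorem convex_simplexOn (s : Finset V) : Convex ℝ (simplexOn s) := by
  rintro f ⟨hf0, hfout, hfsum⟩ g ⟨hg0, hgout, hgsum⟩ a b ha hb hab
  refine ⟨fun v => ?_, fun v hv => ?_, ?_⟩
  · simp only [Pi.add_apply, Pi.smul_apply, smul_eq_mul]
    exact add_nonneg (mul_nonneg ha (hf0 v)) (mul_nonneg hb (hg0 v))
  · simp [hfout v hv, hgout v hv]
  · simp [Finset.sum_add_distrib, ← Finset.mul_sum, hfsum, hgsum, hab]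

theorem simplexOn_mono {s t : Finset V} (h : s ⊆ t) : simplexOn s ⊆ simplexOn t := by
  rintro f ⟨h0, hout, hsum⟩
  refine ⟨h0, fun v hv => hout v fun hs => hv (h hs), ?_⟩
  rwa [← Finset.sum_subset h fun v _ hv => hout v hv]

theorem realization_full_subset (K : SComplex V) (I : Finset V) :
    (K.full I).realization ⊆ K.realization := fun _ hf =>
  let ⟨s, hs, hf⟩ := mem_realization_iff.1 hf
  mem_realization_iff.2 ⟨s, hs.1, hf⟩

variable [DecidableEq V]

theorem mem_simplexOn_erase {s : Finset V} {f : V → ℝ} {v : V} (hf : f ∈ simplexOn s)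
    (hv : f v = 0) : f ∈ simplexOn (s.erase v) := by
  obtain ⟨h0, hout, hsum⟩ := hf
  refine ⟨h0, fun x hx => ?_, ?_⟩
  · by_cases hxv : x = v
    · rwa [hxv]
    · exact hout x fun hxs => hx (Finset.mem_erase.2 ⟨hxv, hxs⟩)
  · rwa [Finset.sum_erase s hv]

def mergeVertex (v w : V) (f : V → ℝ) : V → ℝ :=
  f + f v • (Pi.single w 1 - Pi.single v 1)

theorem continuous_mergeVertex (v w : V) : Continuous (mergeVertex v w) := by
  unfold mergeVertex; fun_prop

theorem mergeVertex_apply_self {v w : V} (hvw : v ≠ w) (f : V → ℝ) : mergeVertex v w f v = 0 := by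
  simp [mergeVertex, hvw]

theorem mergeVertex_apply_right {v w : V} (hvw : v ≠ w) (f : V → ℝ) :
    mergeVertex v w f w = f w + f v := by
  simp [mergeVertex, hvw.symm]

theorem mergeVertex_apply_of_ne {v w x : V} (hxv : x ≠ v) (hxw : x ≠ w) (f : V → ℝ) :
    mergeVertex v w f x = f x := by
  simp [mergeVertex, hxv, hxw]

theorem mergeVertex_of_apply_eq_zero {v : V} (w : V) {f : V → ℝ} (hf : f v = 0) :
    mergeVertex v w f = f := by
  simp [mergeVertex, hf]

theorem mergeVertex_mem_simplexOn {v w : V} (hvw : v ≠ w) {t : Finset V} (hv : v ∈ t)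
    (hw : w ∈ t) {f : V → ℝ} (hf : f ∈ simplexOn t) : mergeVertex v w f ∈ simplexOn t := by
  obtain ⟨h0, hout, hsum⟩ := hf
  refine ⟨fun x => ?_, fun x hx => ?_, ?_⟩
  · by_cases hxv : x = v
    · rw [hxv, mergeVertex_apply_self hvw]
    by_cases hxw : x = w
    · rw [hxw, mergeVertex_apply_right hvw]
      exact add_nonneg (h0 w) (h0 v)
    · rw [mergeVertex_apply_of_ne hxv hxw]
      exact h0 x
  · have hxv : x ≠ v := fun h => hx (h ▸ hv)
    have hxw : x ≠ w := fun h => hx (h ▸ hw)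
    rw [mergeVertex_apply_of_ne hxv hxw]
    exact hout x hx
  · simp [mergeVertex, Finset.sum_add_distrib, ← Finset.mul_sum, Finset.sum_sub_distrib, hv, hw,
      hsum]

section Domination

variable (K : SComplex V)

/-- The link of `v` is a cone with apex `w`. -/
def IsDominatedBy (v w : V) : Prop :=
  ∀ s ∈ K.faces, v ∈ s → insert w s ∈ K.faces

variable {v w : V}

theorem exists_face_mem_simplexOn_mergeVertex (hvw : v ≠ w)
    (hdom : K.IsDominatedBy v w) {f : V → ℝ} (hf : f ∈ K.realization) :
    ∃ t ∈ K.faces, f ∈ simplexOn t ∧ mergeVertex v w f ∈ simplexOn t := by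
  obtain ⟨s, hs, hfs⟩ := mem_realization_iff.1 hf
  by_cases hv : v ∈ s
  · have hst : s ⊆ insert w s := Finset.subset_insert w s
    exact ⟨insert w s, hdom s hs hv, simplexOn_mono hst hfs, mergeVertex_mem_simplexOn hvw (hst hv)
      (Finset.mem_insert_self w s) (simplexOn_mono hst hfs)⟩
  · rw [mergeVertex_of_apply_eq_zero w (hfs.2.1 v hv)]
    exact ⟨s, hs, hfs, hfs⟩

theorem mergeVertex_mem_realization_full_erase (hvw : v ≠ w)
    (hdom : K.IsDominatedBy v w) {f : V → ℝ} (hf : f ∈ K.realization) :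
    mergeVertex v w f ∈ (K.full (K.vertexSet.erase v)).realization := by
  obtain ⟨t, ht, -, hm⟩ := K.exists_face_mem_simplexOn_mergeVertex hvw hdom hf
  refine mem_realization_iff.2 ⟨t.erase v, ⟨K.down_closed ht (Finset.erase_subset v t),
    Finset.erase_subset_erase v (K.face_sub ht)⟩, ?_⟩
  exact mem_simplexOn_erase hm (mergeVertex_apply_self hvw f)

theorem lineMap_mergeVertex_mem_realization (hvw : v ≠ w)
    (hdom : K.IsDominatedBy v w) {f : V → ℝ} (hf : f ∈ K.realization)
    {t : ℝ} (ht : t ∈ Set.Icc 0 1) : AffineMap.lineMap (mergeVertex v w f) f t ∈ K.realization := by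
  obtain ⟨s, hs, hfs, hm⟩ := K.exists_face_mem_simplexOn_mergeVertex hvw hdom hf
  exact mem_realization_iff.2 ⟨s, hs, (convex_simplexOn s).lineMap_mem hm hfs ht⟩

theorem apply_eq_zero_of_mem_realization_full_erase {f : V → ℝ}
    (hf : f ∈ (K.full (K.vertexSet.erase v)).realization) : f v = 0 := by
  obtain ⟨s, hs, hfs⟩ := mem_realization_iff.1 hf
  exact hfs.2.1 v fun h => Finset.notMem_erase v _ (hs.2 h)

/-- Sliding the weight of `v` onto `w` keeps a point of the face `s` inside the face
`insert w s`, so the straight-line homotopy back to the identity stays in `|K|`. -/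
noncomputable def homotopyEquivFullErase (hvw : v ≠ w)
    (hdom : K.IsDominatedBy v w) :
    ContinuousMap.HomotopyEquiv K.realization (K.full (K.vertexSet.erase v)).realization where
  toFun := ⟨fun f => ⟨mergeVertex v w f, K.mergeVertex_mem_realization_full_erase hvw hdom f.2⟩,
    ((continuous_mergeVertex v w).comp continuous_subtype_val).subtype_mk _⟩
  invFun := ⟨Set.inclusion (K.realization_full_subset _), continuous_inclusion _⟩
  left_inv := ⟨{
    toFun := fun p => ⟨AffineMap.lineMap (mergeVertex v w p.2) p.2 (p.1 : ℝ),
      K.lineMap_mergeVertex_mem_realization hvw hdom p.2.2 p.1.2⟩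
    continuous_toFun := by
      refine Continuous.subtype_mk ?_ _
      simp only [AffineMap.lineMap_apply_module]
      have := continuous_mergeVertex v w
      fun_prop
    map_zero_left := fun f => by ext; simp
    map_one_left := fun f => by ext; simp }⟩
  right_inv := by
    convert ContinuousMap.Homotopic.refl _
    ext f x
    simp [mergeVertex_of_apply_eq_zero w (K.apply_eq_zero_of_mem_realization_full_erase f.2)]

end Domination

section TriangleBoundary

variable {a b c : V}

def triangleBoundary (a b c : V) : Set (V → ℝ) :=
  {f | f ∈ simplexOn {a, b, c} ∧ (f a = 0 ∨ f b = 0 ∨ f c = 0)}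

theorem mem_simplexOn_triple (hab : a ≠ b) (hac : a ≠ c) (hbc : b ≠ c) {f : V → ℝ} :
    f ∈ simplexOn {a, b, c} ↔
      (∀ v, 0 ≤ f v) ∧ (∀ v, v ≠ a → v ≠ b → v ≠ c → f v = 0) ∧ f a + f b + f c = 1 := by
  simp [simplexOn, Finset.sum_insert, hab, hac, hbc, add_assoc]

theorem realization_eq_triangleBoundary {K : SComplex V}
    (hK : ∀ s, s ∈ K.faces ↔ s ⊂ {a, b, c}) :
    K.realization = triangleBoundary a b c := by
  ext f
  rw [mem_realization_iff]
  constructor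
  · rintro ⟨s, hs, hf⟩
    have hs := (hK s).1 hs
    refine ⟨simplexOn_mono hs.subset hf, ?_⟩
    obtain ⟨x, hx, hxs⟩ := Finset.exists_of_ssubset hs
    have := hf.2.1 x hxs
    simp only [Finset.mem_insert, Finset.mem_singleton] at hx
    rcases hx with rfl | rfl | rfl <;> simp [this]
  · rintro ⟨hf, hzero⟩
    obtain ⟨x, hx, hfx⟩ : ∃ x ∈ ({a, b, c} : Finset V), f x = 0 := by
      rcases hzero with h | h | h <;> exact ⟨_, by simp, h⟩
    exact ⟨_, (hK _).2 (Finset.erase_ssubset hx), mem_simplexOn_erase hf hfx⟩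

end TriangleBoundary

end Paper.SComplex

namespace Paper.SComplex.triangleBoundary

variable {V : Type*} {a b c : V}

local notation "ℝ²" => EuclideanSpace ℝ (Fin 2)

/-! `proj` sends `a`, `b`, `c` to the vertices `(1, 0)`, `(-1/2, ±√3/2)` of an equilateral
triangle centred at `0`, and `ℓᵢ` is the inner product with the `i`-th vertex, so the triangle
is `{u | depth u ≤ 1/2}`. For `u ≠ 0`, `lift u` is the point of its boundary on the ray through
`u`, in barycentric coordinates. -/

noncomputable def proj (a b c : V) (f : V → ℝ) : ℝ² :=
  !₂[f a - (f b + f c) / 2, √3 / 2 * (f b - f c)]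

def ℓ₁ (u : ℝ²) : ℝ := u 0

noncomputable def ℓ₂ (u : ℝ²) : ℝ := -u 0 / 2 + √3 / 2 * u 1

noncomputable def ℓ₃ (u : ℝ²) : ℝ := -u 0 / 2 - √3 / 2 * u 1

noncomputable def depth (u : ℝ²) : ℝ := max (max (-ℓ₁ u) (-ℓ₂ u)) (-ℓ₃ u)

theorem proj_apply_zero (f : V → ℝ) : proj a b c f 0 = f a - (f b + f c) / 2 := by
  simp [proj]

theorem proj_apply_one (f : V → ℝ) : proj a b c f 1 = √3 / 2 * (f b - f c) := by
  simp [proj]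

theorem sqrt_three_mul_self : √3 * √3 = 3 := Real.mul_self_sqrt (by norm_num)

theorem ℓ_sum (u : ℝ²) : ℓ₁ u + ℓ₂ u + ℓ₃ u = 0 := by
  simp only [ℓ₁, ℓ₂, ℓ₃]; ring

theorem ℓ_proj {f : V → ℝ} (h : f a + f b + f c = 1) :
    ℓ₁ (proj a b c f) = (3 * f a - 1) / 2 ∧ ℓ₂ (proj a b c f) = (3 * f b - 1) / 2 ∧
      ℓ₃ (proj a b c f) = (3 * f c - 1) / 2 := by
  simp only [ℓ₁, ℓ₂, ℓ₃, proj_apply_zero, proj_apply_one]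
  refine ⟨by linear_combination (-1/2) * h, ?_, ?_⟩
  · linear_combination (f b - f c) / 4 * sqrt_three_mul_self - (1/2) * h
  · linear_combination (f c - f b) / 4 * sqrt_three_mul_self - (1/2) * h

theorem le_depth (u : ℝ²) : -ℓ₁ u ≤ depth u ∧ -ℓ₂ u ≤ depth u ∧ -ℓ₃ u ≤ depth u :=
  ⟨(le_max_left _ _).trans (le_max_left _ _), (le_max_right _ _).trans (le_max_left _ _),
    le_max_right _ _⟩

theorem depth_mem (u : ℝ²) : depth u = -ℓ₁ u ∨ depth u = -ℓ₂ u ∨ depth u = -ℓ₃ u := by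
  unfold depth
  rcases max_choice (max (-ℓ₁ u) (-ℓ₂ u)) (-ℓ₃ u) with h | h <;> rw [h]
  · rcases max_choice (-ℓ₁ u) (-ℓ₂ u) with h' | h' <;> simp [h']
  · simp

theorem depth_pos {u : ℝ²} (hu : u ≠ 0) : 0 < depth u := by
  by_contra! h
  obtain ⟨h₁, h₂, h₃⟩ := le_depth u
  have hs := ℓ_sum u
  have hu0 : u 0 = 0 := by simp only [ℓ₁] at h₁ hs ⊢; linarith
  have hu1 : √3 * u 1 = 0 := by simp only [ℓ₁, ℓ₂, ℓ₃] at h₁ h₂ h₃ ⊢; linarith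
  apply hu
  ext i
  fin_cases i
  · simpa using hu0
  · simpa [(Real.sqrt_pos.2 (by norm_num : (0:ℝ) < 3)).ne'] using hu1

theorem ℓ_smul (t : ℝ) (u : ℝ²) :
    ℓ₁ (t • u) = t * ℓ₁ u ∧ ℓ₂ (t • u) = t * ℓ₂ u ∧ ℓ₃ (t • u) = t * ℓ₃ u := by
  refine ⟨by simp [ℓ₁], by simp [ℓ₂]; ring, by simp [ℓ₃]; ring⟩

theorem depth_smul {t : ℝ} (ht : 0 ≤ t) (u : ℝ²) : depth (t • u) = t * depth u := by
  obtain ⟨h₁, h₂, h₃⟩ := ℓ_smul t u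
  simp only [depth, h₁, h₂, h₃, ← mul_neg, mul_max_of_nonneg _ _ ht]

theorem continuous_proj (a b c : V) : Continuous (proj a b c) := by
  unfold proj; fun_prop

@[fun_prop]
theorem continuous_ℓ₁ : Continuous ℓ₁ := by
  unfold ℓ₁; fun_prop

@[fun_prop]
theorem continuous_ℓ₂ : Continuous ℓ₂ := by
  unfold ℓ₂; fun_prop

@[fun_prop]
theorem continuous_ℓ₃ : Continuous ℓ₃ := by
  unfold ℓ₃; fun_prop

@[fun_prop]
theorem continuous_depth : Continuous depth := by
  unfold depth; fun_prop

variable [DecidableEq V]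

theorem mem_triangleBoundary_iff (hab : a ≠ b) (hac : a ≠ c) (hbc : b ≠ c) {f : V → ℝ} :
    f ∈ triangleBoundary a b c ↔ (∀ v, 0 ≤ f v) ∧ (∀ v, v ≠ a → v ≠ b → v ≠ c → f v = 0) ∧
      f a + f b + f c = 1 ∧ (f a = 0 ∨ f b = 0 ∨ f c = 0) := by
  rw [triangleBoundary, Set.mem_ofPred_eq, mem_simplexOn_triple hab hac hbc, and_assoc, and_assoc]

theorem depth_proj (hab : a ≠ b) (hac : a ≠ c) (hbc : b ≠ c) {f : V → ℝ}
    (hf : f ∈ triangleBoundary a b c) : depth (proj a b c f) = 1 / 2 := by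
  obtain ⟨h0, -, hsum, hzero⟩ := (mem_triangleBoundary_iff hab hac hbc).1 hf
  obtain ⟨e₁, e₂, e₃⟩ := ℓ_proj hsum
  obtain ⟨l₁, l₂, l₃⟩ := le_depth (proj a b c f)
  refine le_antisymm ?_ ?_
  · rcases depth_mem (proj a b c f) with h | h | h <;> linarith [h0 a, h0 b, h0 c]
  · rcases hzero with z | z | z <;> linarith

theorem proj_ne_zero (hab : a ≠ b) (hac : a ≠ c) (hbc : b ≠ c) {f : V → ℝ}
    (hf : f ∈ triangleBoundary a b c) : proj a b c f ≠ 0 := by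
  intro h
  have := depth_proj hab hac hbc hf
  rw [h] at this
  simp [depth, ℓ₁, ℓ₂, ℓ₃] at this

noncomputable def lift (a b c : V) (u : ℝ²) : V → ℝ := fun v =>
  if v = a then (ℓ₁ u + depth u) / (3 * depth u)
  else if v = b then (ℓ₂ u + depth u) / (3 * depth u)
  else if v = c then (ℓ₃ u + depth u) / (3 * depth u)
  else 0

theorem lift_apply (hab : a ≠ b) (hac : a ≠ c) (hbc : b ≠ c) (u : ℝ²) :
    lift a b c u a = (ℓ₁ u + depth u) / (3 * depth u) ∧
      lift a b c u b = (ℓ₂ u + depth u) / (3 * depth u) ∧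
      lift a b c u c = (ℓ₃ u + depth u) / (3 * depth u) := by
  simp [lift, hab.symm, hac.symm, hbc.symm]

theorem lift_smul {t : ℝ} (ht : 0 < t) (u : ℝ²) : lift a b c (t • u) = lift a b c u := by
  obtain ⟨h₁, h₂, h₃⟩ := ℓ_smul t u
  have key : ∀ x, (t * x + t * depth u) / (3 * (t * depth u)) = (x + depth u) / (3 * depth u) :=
    fun x => by rw [← mul_add, mul_left_comm, mul_div_mul_left _ _ ht.ne']
  funext v
  simp only [lift, h₁, h₂, h₃, depth_smul ht.le, key]

theorem lift_proj (hab : a ≠ b) (hac : a ≠ c) (hbc : b ≠ c) {f : V → ℝ}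
    (hf : f ∈ triangleBoundary a b c) : lift a b c (proj a b c f) = f := by
  obtain ⟨-, hout, hsum, -⟩ := (mem_triangleBoundary_iff hab hac hbc).1 hf
  obtain ⟨e₁, e₂, e₃⟩ := ℓ_proj hsum
  have hd := depth_proj hab hac hbc hf
  obtain ⟨ha, hb, hc⟩ := lift_apply hab hac hbc (proj a b c f)
  funext v
  by_cases hva : v = a
  · rw [hva, ha, e₁, hd]; ring
  by_cases hvb : v = b
  · rw [hvb, hb, e₂, hd]; ring
  by_cases hvc : v = c
  · rw [hvc, hc, e₃, hd]; ring
  · simp only [lift, if_neg hva, if_neg hvb, if_neg hvc, hout v hva hvb hvc]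

theorem lift_mem (hab : a ≠ b) (hac : a ≠ c) (hbc : b ≠ c) {u : ℝ²} (hu : u ≠ 0) :
    lift a b c u ∈ triangleBoundary a b c := by
  have hd := depth_pos hu
  obtain ⟨l₁, l₂, l₃⟩ := le_depth u
  have hs := ℓ_sum u
  obtain ⟨ha, hb, hc⟩ := lift_apply hab hac hbc u
  rw [mem_triangleBoundary_iff hab hac hbc, ha, hb, hc]
  refine ⟨fun v => ?_, fun v hva hvb hvc => by simp [lift, hva, hvb, hvc], ?_, ?_⟩
  · unfold lift
    split_ifs <;> first | exact le_rfl | exact div_nonneg (by linarith) (by linarith)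
  · field_simp
    linarith
  · rcases depth_mem u with h | h | h <;> simp [h]

theorem proj_lift (hab : a ≠ b) (hac : a ≠ c) (hbc : b ≠ c) {u : ℝ²} (hu : u ≠ 0) :
    proj a b c (lift a b c u) = (2 * depth u)⁻¹ • u := by
  have hd := (depth_pos hu).ne'
  obtain ⟨ha, hb, hc⟩ := lift_apply hab hac hbc u
  ext i
  fin_cases i
  · simp only [Fin.zero_eta, proj_apply_zero, ha, hb, hc, ℓ₁, ℓ₂, ℓ₃, PiLp.smul_apply, smul_eq_mul]
    field_simp
    ring
  · simp only [Fin.mk_one, proj_apply_one, hb, hc, ℓ₂, ℓ₃, PiLp.smul_apply, smul_eq_mul]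
    field_simp
    linear_combination 2 * u 1 * sqrt_three_mul_self

theorem continuousOn_lift : ContinuousOn (lift a b c) {0}ᶜ := by
  have hd : ∀ u ∈ ({0}ᶜ : Set ℝ²), 3 * depth u ≠ 0 := fun u hu => by
    have := depth_pos hu; positivity
  refine continuousOn_pi.2 fun v => ?_
  unfold lift
  split_ifs
  all_goals first
    | exact continuousOn_const
    | exact ContinuousOn.div (by fun_prop) (by fun_prop) hd

noncomputable def homeomorphSphere (hab : a ≠ b) (hac : a ≠ c) (hbc : b ≠ c) :
    triangleBoundary a b c ≃ₜ Metric.sphere (0 : ℝ²) 1 where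
  toFun f := ⟨‖proj a b c f‖⁻¹ • proj a b c f, by
    rw [mem_sphere_zero_iff_norm, norm_smul, norm_inv, norm_norm,
      inv_mul_cancel₀ (norm_ne_zero_iff.2 (proj_ne_zero hab hac hbc f.2))]⟩
  invFun u := ⟨lift a b c u, lift_mem hab hac hbc (ne_zero_of_mem_unit_sphere u)⟩
  left_inv f := Subtype.ext <| by
    dsimp only
    rw [lift_smul (inv_pos.2 (norm_pos_iff.2 (proj_ne_zero hab hac hbc f.2))),
      lift_proj hab hac hbc f.2]
  right_inv u := Subtype.ext <| by
    have ht := inv_pos.2 (mul_pos two_pos (depth_pos (ne_zero_of_mem_unit_sphere u)))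
    dsimp only
    rw [proj_lift hab hac hbc (ne_zero_of_mem_unit_sphere u), norm_smul, Real.norm_of_nonneg ht.le,
      norm_eq_of_mem_sphere, mul_one, smul_smul, inv_mul_cancel₀ ht.ne', one_smul]
  continuous_toFun := by
    have hproj : Continuous fun f : triangleBoundary a b c => proj a b c f :=
      (continuous_proj a b c).comp continuous_subtype_val
    have hne : ∀ f : triangleBoundary a b c, ‖proj a b c f‖ ≠ 0 :=
      fun f => norm_ne_zero_iff.2 (proj_ne_zero hab hac hbc f.2)
    exact ((hproj.norm.inv₀ hne).smul hproj).subtype_mk _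
  continuous_invFun := (continuousOn_lift.comp_continuous continuous_subtype_val
    ne_zero_of_mem_unit_sphere).subtype_mk _

end Paper.SComplex.triangleBoundary

namespace Paper.SComplex

variable {V : Type*} (K : SComplex V)

theorem chainCast_chainCast {a b c : ℤ} (h : a = b) (h' : b = c) (x : K.chainZ a) :
    K.chainCast h' (K.chainCast h x) = K.chainCast (h.trans h') x := by
  subst h h'; rfl

theorem chainCast_symm {a b : ℤ} (h : a = b) : (K.chainCast h).symm = K.chainCast h.symm := by
  subst h; rfl

theorem chainCast_self {a : ℤ} (h : a = a) (x : K.chainZ a) : K.chainCast h x = x := rfl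

/-- Zero off the basis, so that the boundary formulas below hold in every degree. -/
noncomputable def cellChain (n : ℤ) (s : Finset V) : K.chainZ n :=
  open Classical in if h : s ∈ K.faces ∧ (s.card : ℤ) = n + 1 then Finsupp.single ⟨s, h⟩ 1 else 0

theorem cellChain_of_mem {n : ℤ} (σ : {σ : Finset V // σ ∈ K.faces ∧ (σ.card : ℤ) = n + 1}) :
    K.cellChain n σ.1 = Finsupp.single σ 1 := by
  simp [cellChain, σ.2]

theorem cellChain_eq_zero {n : ℤ} {s : Finset V} (h : (s.card : ℤ) ≠ n + 1) :
    K.cellChain n s = 0 := by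
  simp [cellChain, h]

theorem cochain_ext {n : ℤ} {M : Type*} [AddCommGroup M] {φ ψ : K.chainZ n →ₗ[ℤ] M}
    (h : ∀ s ∈ K.faces, (s.card : ℤ) = n + 1 → φ (K.cellChain n s) = ψ (K.cellChain n s)) :
    φ = ψ := by
  refine Finsupp.lhom_ext' fun σ => LinearMap.ext_ring ?_
  simpa [K.cellChain_of_mem σ] using h σ.1 σ.2.1 σ.2.2

noncomputable def cochainOf (n : ℤ) (g : Finset V → ℤ) : K.chainZ n →ₗ[ℤ] ℤ :=
  Finsupp.linearCombination ℤ fun σ => g σ.1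

theorem cochainOf_cellChain {n : ℤ} (g : Finset V → ℤ) {s : Finset V} (hs : s ∈ K.faces)
    (hc : (s.card : ℤ) = n + 1) : K.cochainOf n g (K.cellChain n s) = g s := by
  simp [cochainOf, K.cellChain_of_mem ⟨s, hs, hc⟩]

variable [DecidableEq V] [LinearOrder V]

theorem bdry_chainCast {a b : ℤ} (h : a = b) (x : K.chainZ a) :
    K.bdry b (K.chainCast h x) = K.chainCast (congrArg (· - 1) h) (K.bdry a x) := by
  subst h; rfl

theorem mem_cobdries_iff {n : ℤ} {φ : K.chainZ n →ₗ[ℤ] ℤ} :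
    φ ∈ K.cobdries n ↔ ∃ ψ : K.chainZ (n - 1) →ₗ[ℤ] ℤ, φ = ψ ∘ₗ K.bdry n := by
  have key : ∀ ψ : K.chainZ (n - 1) →ₗ[ℤ] ℤ,
      LinearEquiv.arrowCongr (K.chainCast (show n - 1 + 1 = n by ring)) (LinearEquiv.refl ℤ ℤ)
        (K.cobdry (n - 1) ψ) = ψ ∘ₗ K.bdry n := by
    refine fun ψ => LinearMap.ext fun c => ?_
    simp [cobdry, chainCast_symm, bdry_chainCast, chainCast_chainCast, chainCast_self]
  simp only [cobdries, Submodule.mem_map, LinearMap.mem_range]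
  constructor
  · rintro ⟨_, ⟨ψ, rfl⟩, rfl⟩
    exact ⟨ψ, key ψ⟩
  · rintro ⟨ψ, rfl⟩
    exact ⟨_, ⟨ψ, rfl⟩, key ψ⟩

theorem bdry_cellChain {n : ℤ} {s : Finset V} (hs : s ∈ K.faces) (hc : (s.card : ℤ) = n + 1) :
    K.bdry n (K.cellChain n s) = ∑ j : Fin (s.sort (· ≤ ·)).length,
      (-1 : ℤ) ^ (j : ℕ) • K.cellChain (n - 1) (s.erase ((s.sort (· ≤ ·)).get j)) := by
  rw [K.cellChain_of_mem ⟨s, hs, hc⟩, bdry, Finsupp.lsum_single,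
    LinearMap.toSpanSingleton_apply_one, bdryElem]
  refine Eq.trans ?_ (Fin.sum_congr' _ (Finset.length_sort _).symm)
  refine Finset.sum_congr rfl fun i _ => ?_
  rw [← cellChain_of_mem]
  rfl

theorem bdry_cellChain_singleton {n : ℤ} {a : V} (ha : {a} ∈ K.faces) :
    K.bdry n (K.cellChain n {a}) = K.cellChain (n - 1) ∅ := by
  rcases eq_or_ne n 0 with rfl | hn
  · rw [K.bdry_cellChain ha (by simp), Finset.sort_singleton]
    simp
  · rw [K.cellChain_eq_zero (by simp; omega), K.cellChain_eq_zero (by simp; omega), map_zero]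

theorem bdry_cellChain_pair {n : ℤ} {a b : V} (hab : a < b) (h : {a, b} ∈ K.faces) :
    K.bdry n (K.cellChain n {a, b}) = K.cellChain (n - 1) {b} - K.cellChain (n - 1) {a} := by
  rcases eq_or_ne n 1 with rfl | hn
  · rw [K.bdry_cellChain h (by simp [hab.ne]),
      Finset.sort_insert (r := (· ≤ ·)) (by simp [hab.le]) (by simp [hab.ne]),
      Finset.sort_singleton]
    simp [Fin.sum_univ_two, hab.ne, Finset.erase_insert_of_ne, sub_eq_add_neg]
  · rw [K.cellChain_eq_zero (by simp [hab.ne]; omega), K.cellChain_eq_zero (by simp; omega),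
      K.cellChain_eq_zero (by simp; omega), map_zero, sub_zero]

theorem bdry_cellChain_triple {n : ℤ} {a b c : V} (hab : a < b) (hbc : b < c)
    (h : {a, b, c} ∈ K.faces) :
    K.bdry n (K.cellChain n {a, b, c}) =
      K.cellChain (n - 1) {b, c} - K.cellChain (n - 1) {a, c} + K.cellChain (n - 1) {a, b} := by
  have hac := hab.trans hbc
  rcases eq_or_ne n 2 with rfl | hn
  · rw [K.bdry_cellChain h (by simp [hab.ne, hbc.ne, hac.ne]),
      Finset.sort_insert (r := (· ≤ ·)) (by simp [hab.le, hac.le]) (by simp [hab.ne, hac.ne]),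
      Finset.sort_insert (r := (· ≤ ·)) (by simp [hbc.le]) (by simp [hbc.ne]),
      Finset.sort_singleton]
    simp [Fin.sum_univ_three, hab.ne, hbc.ne, hac.ne, Finset.erase_insert_of_ne, sub_eq_add_neg]
  · rw [K.cellChain_eq_zero (by simp [hab.ne, hbc.ne, hac.ne]; omega),
      K.cellChain_eq_zero (by simp [hbc.ne]; omega), K.cellChain_eq_zero (by simp [hac.ne]; omega),
      K.cellChain_eq_zero (by simp [hab.ne]; omega), map_zero, sub_zero, add_zero]

theorem subsingleton_reducedCohomology_iff {n : ℤ} :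
    Subsingleton (K.reducedCohomology n) ↔ K.cocycles n ≤ K.cobdries n := by
  rw [Submodule.Quotient.subsingleton_iff, Submodule.comap_subtype_eq_top, le_inf_iff]
  exact and_iff_left le_rfl

theorem nonempty_reducedCohomology_equiv {n : ℤ} {M : Type*} [AddCommGroup M]
    (E : K.cocycles n →ₗ[ℤ] M) (hE : Function.Surjective E)
    (hker : ∀ φ : K.cocycles n, E φ = 0 ↔ (φ : K.chainZ n →ₗ[ℤ] ℤ) ∈ K.cobdries n) :
    Nonempty (K.reducedCohomology n ≃ₗ[ℤ] M) := by
  have h : Submodule.comap (K.cocycles n).subtype (K.cobdries n ⊓ K.cocycles n) =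
      LinearMap.ker E := by
    ext φ
    simp [hker]
  exact ⟨(Submodule.quotEquivOfEq _ _ h).trans (E.quotKerEquivOfSurjective hE)⟩

theorem subsingleton_reducedCohomology_zero_of_star (v₀ : V)
    (hstar : ∀ v, {v} ∈ K.faces → {v₀, v} ∈ K.faces) : Subsingleton (K.reducedCohomology 0) := by
  rw [subsingleton_reducedCohomology_iff]
  intro φ hφ
  have hedge : ∀ c : K.chainZ 1, φ (K.bdry 1 c) = 0 := LinearMap.congr_fun hφ
  have hconst : ∀ v, {v} ∈ K.faces → φ (K.cellChain 0 {v}) = φ (K.cellChain 0 {v₀}) := by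
    intro v hv
    rcases lt_trichotomy v v₀ with h | rfl | h
    · have := hedge (K.cellChain 1 {v, v₀})
      rw [K.bdry_cellChain_pair h (by rw [Finset.pair_comm]; exact hstar v hv), map_sub,
        sub_eq_zero] at this
      exact this.symm
    · rfl
    · have := hedge (K.cellChain 1 {v₀, v})
      rwa [K.bdry_cellChain_pair h (hstar v hv), map_sub, sub_eq_zero] at this
  refine K.mem_cobdries_iff.2
    ⟨K.cochainOf (0 - 1) fun _ => φ (K.cellChain 0 {v₀}), K.cochain_ext fun s hs hc => ?_⟩
  obtain ⟨v, rfl⟩ := Finset.card_eq_one.1 (by simp at hc; omega)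
  rw [LinearMap.comp_apply, K.bdry_cellChain_singleton hs,
    K.cochainOf_cellChain _ K.empty_mem (by simp), hconst v hs]

end Paper.SComplex

open Paper Paper.SComplex

abbrev K1234 : SComplex ℕ := Kpaper.full {1,2,3,4}

namespace K1234

def faceList : Finset (Finset ℕ) :=
  {∅, {1}, {2}, {3}, {4}, {1,2}, {1,3}, {1,4}, {2,3}, {2,4}, {3,4}, {1,2,4}, {2,3,4}}

theorem mem_faces_iff (s : Finset ℕ) : s ∈ K1234.faces ↔ s ∈ faceList := by
  have key : ∀ s ∈ ({1,2,3,4} : Finset ℕ).powerset, (∃ t ∈ tetraList, s ⊆ t) ↔ s ∈ faceList := by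
    decide
  refine ⟨fun ⟨hK, hI⟩ => (key s (Finset.mem_powerset.2 hI)).1 hK, fun hs => ?_⟩
  have hI : s ∈ ({1,2,3,4} : Finset ℕ).powerset := by revert s hs; decide
  exact ⟨(key s hI).2 hs, Finset.mem_powerset.1 hI⟩

theorem mem_faces {s : Finset ℕ} (hs : s ∈ faceList := by decide) : s ∈ K1234.faces :=
  (mem_faces_iff s).2 hs

theorem MF_eq : K1234.MF = ({{1,2,3},{1,3,4}} : Set (Finset ℕ)) := by
  have key : ∀ σ ∈ ({1,2,3,4} : Finset ℕ).powerset,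
      (σ ∉ faceList ∧ ∀ t ∈ σ.ssubsets, t ∈ faceList) ↔ σ = {1,2,3} ∨ σ = {1,3,4} := by
    decide
  ext σ
  simp only [MF, mem_faces_iff, ← Finset.mem_ssubsets, Set.mem_ofPred_eq, Set.mem_insert_iff,
    Set.mem_singleton_iff]
  constructor
  · rintro ⟨hI, hσ⟩
    exact (key σ (Finset.mem_powerset.2 hI)).1 hσ
  · intro hσ
    have hI : σ ⊆ {1,2,3,4} := by rcases hσ with rfl | rfl <;> decide
    exact ⟨hI, (key σ (Finset.mem_powerset.2 hI)).2 hσ⟩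

theorem isDominatedBy_four_two : K1234.IsDominatedBy 4 2 := by
  have key : ∀ s ∈ faceList, 4 ∈ s → insert 2 s ∈ faceList := by decide
  intro s hs h4
  exact mem_faces (key s ((mem_faces_iff s).1 hs) h4)

theorem mem_faces_full_erase_iff (s : Finset ℕ) :
    s ∈ (K1234.full (K1234.vertexSet.erase 4)).faces ↔ s ⊂ {1,2,3} := by
  have key : ∀ s ∈ ({1,2,3} : Finset ℕ).powerset, s ∈ faceList ↔ s ⊂ {1,2,3} := by decide
  have hI : K1234.vertexSet.erase 4 = {1,2,3} := by decide
  change s ∈ K1234.faces ∧ s ⊆ K1234.vertexSet.erase 4 ↔ _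
  rw [mem_faces_iff, hI]
  exact ⟨fun ⟨hs, hI⟩ => (key s (Finset.mem_powerset.2 hI)).1 hs,
    fun h => ⟨(key s (Finset.mem_powerset.2 h.subset)).2 h, h.subset⟩⟩

noncomputable def homotopyEquivSphere :
    ContinuousMap.HomotopyEquiv K1234.realization
      (Metric.sphere (0 : EuclideanSpace ℝ (Fin 2)) 1) :=
  (K1234.homotopyEquivFullErase (by norm_num) isDominatedBy_four_two).trans
    ((Homeomorph.setCongr (realization_eq_triangleBoundary mem_faces_full_erase_iff)).trans
      (triangleBoundary.homeomorphSphere (by norm_num) (by norm_num) (by norm_num))).toHomotopyEquiv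

theorem subsingleton_reducedCohomology_zero : Subsingleton (K1234.reducedCohomology 0) := by
  refine K1234.subsingleton_reducedCohomology_zero_of_star 1 fun v hv => mem_faces ?_
  have key : ∀ v ∈ ({1,2,3,4} : Finset ℕ), ({1, v} : Finset ℕ) ∈ faceList := by decide
  exact key v (K1234.face_sub hv (Finset.mem_singleton_self v))

noncomputable def loop : K1234.chainZ 1 :=
  K1234.cellChain 1 {1,2} + K1234.cellChain 1 {2,3} - K1234.cellChain 1 {1,3}

theorem bdry_loop : K1234.bdry 1 loop = 0 := by
  simp only [loop, map_add, map_sub]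
  rw [K1234.bdry_cellChain_pair (by norm_num) mem_faces,
    K1234.bdry_cellChain_pair (by norm_num) mem_faces,
    K1234.bdry_cellChain_pair (by norm_num) mem_faces]
  abel

theorem edge_cases {s : Finset ℕ} (hs : s ∈ K1234.faces) (hc : (s.card : ℤ) = 1 + 1) :
    s = {1,2} ∨ s = {1,3} ∨ s = {1,4} ∨ s = {2,3} ∨ s = {2,4} ∨ s = {3,4} := by
  have key : ∀ s ∈ faceList, s.card = 2 →
      s = {1,2} ∨ s = {1,3} ∨ s = {1,4} ∨ s = {2,3} ∨ s = {2,4} ∨ s = {3,4} := by decide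
  exact key s ((mem_faces_iff s).1 hs) (by omega)

theorem triangle_cases {s : Finset ℕ} (hs : s ∈ K1234.faces) (hc : (s.card : ℤ) = 2 + 1) :
    s = {1,2,4} ∨ s = {2,3,4} := by
  have key : ∀ s ∈ faceList, s.card = 3 → s = {1,2,4} ∨ s = {2,3,4} := by decide
  exact key s ((mem_faces_iff s).1 hs) (by omega)

theorem mem_cocycles_one_iff {φ : K1234.chainZ 1 →ₗ[ℤ] ℤ} :
    φ ∈ K1234.cocycles 1 ↔
      φ (K1234.cellChain 1 {2,4}) - φ (K1234.cellChain 1 {1,4}) + φ (K1234.cellChain 1 {1,2}) = 0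
      ∧ φ (K1234.cellChain 1 {3,4}) - φ (K1234.cellChain 1 {2,4}) + φ (K1234.cellChain 1 {2,3}) = 0
      := by
  have hδ : ∀ c, K1234.cobdry 1 φ c = φ (K1234.bdry 2 c) := fun _ => rfl
  have h124 := hδ (K1234.cellChain 2 {1,2,4})
  have h234 := hδ (K1234.cellChain 2 {2,3,4})
  rw [K1234.bdry_cellChain_triple (by norm_num) (by norm_num) mem_faces, map_add, map_sub] at h124
  rw [K1234.bdry_cellChain_triple (by norm_num) (by norm_num) mem_faces, map_add, map_sub] at h234
  refine ⟨fun hφ => ⟨h124 ▸ LinearMap.congr_fun hφ _, h234 ▸ LinearMap.congr_fun hφ _⟩, ?_⟩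
  rintro ⟨r124, r234⟩
  refine K1234.cochain_ext fun s hs hc => ?_
  rcases triangle_cases hs hc with rfl | rfl
  · exact h124.trans r124
  · exact h234.trans r234

theorem cochainOf_cellChain_of_mem_faceList {n : ℤ} (g : Finset ℕ → ℤ) {s : Finset ℕ}
    (hs : s ∈ faceList) (hc : (s.card : ℤ) = n + 1) :
    K1234.cochainOf n g (K1234.cellChain n s) = g s :=
  SComplex.cochainOf_cellChain K1234 g (mem_faces hs) hc

noncomputable def dualEdge13 : K1234.chainZ 1 →ₗ[ℤ] ℤ :=
  K1234.cochainOf 1 fun s => if s = {1,3} then -1 else 0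

theorem dualEdge13_mem_cocycles : dualEdge13 ∈ K1234.cocycles 1 := by
  rw [mem_cocycles_one_iff]
  simp (disch := decide) only [dualEdge13, cochainOf_cellChain_of_mem_faceList]
  decide

noncomputable def evalLoop : K1234.cocycles 1 →ₗ[ℤ] ℤ :=
  (LinearMap.applyₗ loop).comp (K1234.cocycles 1).subtype

theorem evalLoop_apply (φ : K1234.cocycles 1) : evalLoop φ =
    φ.1 (K1234.cellChain 1 {1,2}) + φ.1 (K1234.cellChain 1 {2,3}) - φ.1 (K1234.cellChain 1 {1,3})
    := by
  simp [evalLoop, loop]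

theorem evalLoop_dualEdge13 : evalLoop ⟨dualEdge13, dualEdge13_mem_cocycles⟩ = 1 := by
  rw [evalLoop_apply]
  simp (disch := decide) only [dualEdge13, cochainOf_cellChain_of_mem_faceList]
  decide

theorem evalLoop_surjective : Function.Surjective evalLoop := fun m =>
  ⟨m • ⟨dualEdge13, dualEdge13_mem_cocycles⟩, by
    rw [map_zsmul, evalLoop_dualEdge13, zsmul_one, Int.cast_id]⟩

theorem evalLoop_eq_zero_iff (φ : K1234.cocycles 1) :
    evalLoop φ = 0 ↔ (φ : K1234.chainZ 1 →ₗ[ℤ] ℤ) ∈ K1234.cobdries 1 := by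
  rw [K1234.mem_cobdries_iff]
  constructor
  · intro hloop
    obtain ⟨r124, r234⟩ := mem_cocycles_one_iff.1 φ.2
    -- `ψ {v} = φ [1, v]`: this matches `φ` on the edges through `1`, and the two cocycle
    -- relations together with `φ loop = 0` give the remaining edges `23`, `24`, `34`.
    refine ⟨K1234.cochainOf (1 - 1) fun s => φ.1 (K1234.cellChain 1 (insert 1 s)),
      K1234.cochain_ext fun s hs hc => ?_⟩
    rw [evalLoop_apply] at hloop
    rcases edge_cases hs hc with rfl | rfl | rfl | rfl | rfl | rfl <;>
    · rw [LinearMap.comp_apply, K1234.bdry_cellChain_pair (by norm_num) mem_faces, map_sub]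
      simp (disch := decide) only [cochainOf_cellChain_of_mem_faceList, Finset.insert_eq_of_mem,
        K1234.cellChain_eq_zero, map_zero, sub_zero] <;> linarith
  · rintro ⟨ψ, hψ⟩
    change φ.1 loop = 0
    rw [hψ, LinearMap.comp_apply, bdry_loop, map_zero]

theorem nonempty_reducedCohomology_one_equiv : Nonempty (K1234.reducedCohomology 1 ≃ₗ[ℤ] ℤ) :=
  K1234.nonempty_reducedCohomology_equiv evalLoop evalLoop_surjective evalLoop_eq_zero_iff

end K1234

theorem stmt9 :
    (Kpaper.full {1,2,3,4}).MF = ({{1,2,3},{1,3,4}} : Set (Finset ℕ)) ∧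
    Nonempty (ContinuousMap.HomotopyEquiv ↥((Kpaper.full {1,2,3,4}).realization)
      ↥(Metric.sphere (0 : EuclideanSpace ℝ (Fin 2)) 1)) ∧
    Nonempty ((Kpaper.full {1,2,3,4}).reducedCohomology 1 ≃ₗ[ℤ] ℤ) ∧
    Subsingleton ((Kpaper.full {1,2,3,4}).reducedCohomology 0) :=
  ⟨K1234.MF_eq, ⟨K1234.homotopyEquivSphere⟩, K1234.nonempty_reducedCohomology_one_equiv,
    K1234.subsingleton_reducedCohomology_zero⟩
end

section
/- Let K be the simplicial complex on {1,…,8} from Construction 3.1 and let I ⊆ {1,…,8} with |I| = 2. Then the full subcomplex K_I is disconnected (equivalently H̃⁰(K_I; ℤ) ≠ 0) if and only if I = {5,6} or I = {7,8}. -/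
/-!
A reduced 0-cochain on a complex is a coboundary exactly when it is constant on the vertices,
and a cocycle exactly when it agrees on the two ends of every edge. On the full subcomplex on
two vertices `{a, b}` the cocycles are therefore all coboundaries if `{a, b}` is an edge, while
otherwise the indicator of `a` is a cocycle that is not a coboundary. So `H̃⁰(K_{a,b})` vanishes
iff `{a, b}` is an edge, and among the 28 vertex pairs of `K` only `{5, 6}` and `{7, 8}` lie in
no tetrahedron of the list.
-/

namespace Paper.SComplex

variable {V : Type*}

abbrev Face (K : SComplex V) (n : ℤ) : Type _ :=
  {σ : Finset V // σ ∈ K.faces ∧ (σ.card : ℤ) = n + 1}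

def vertex (K : SComplex V) (v : V) (h : {v} ∈ K.faces) : K.Face 0 :=
  ⟨{v}, h, by simp⟩

lemma Face.exists_eq_singleton {K : SComplex V} (σ : K.Face 0) : ∃ v, σ.1 = {v} :=
  Finset.card_eq_one.mp (by exact_mod_cast σ.2.2)

lemma chainCast_single (K : SComplex V) {m n : ℤ} (h : m = n) (σ : K.Face m) (c : ℤ) :
    K.chainCast h (Finsupp.single σ c) = Finsupp.single ⟨σ.1, σ.2.1, by rw [σ.2.2, h]⟩ c := by
  subst h; rfl

lemma chainCast_symm_s15 (K : SComplex V) {m n : ℤ} (h : m = n) :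
    (K.chainCast h).symm = K.chainCast h.symm := by
  subst h; rfl

private lemma single_congr {P : Finset V → Prop} {x y : Finset V} (h : x = y) (p : P x) (q : P y)
    (c : ℤ) : (Finsupp.single ⟨x, p⟩ c : {s // P s} →₀ ℤ) = Finsupp.single ⟨y, q⟩ c := by
  subst h; rfl

private lemma sum_fin_cast {M : Type*} [AddCommMonoid M] {n m : ℕ} (h : n = m) (f : Fin n → M) :
    ∑ i, f i = ∑ i : Fin m, f (Fin.cast h.symm i) := by
  subst h; rfl

lemma isEmpty_full_pair_face_one [DecidableEq V] (K : SComplex V) {a b : V}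
    (hedge : {a, b} ∉ K.faces) :
    IsEmpty ((K.full {a, b}).Face (0 + 1)) := by
  refine ⟨fun σ => hedge ?_⟩
  have hσ : σ.1 = {a, b} := Finset.eq_of_subset_of_card_le σ.2.1.2 <| by
    have := σ.2.2; have := Finset.card_le_two (a := a) (b := b); omega
  exact hσ ▸ σ.2.1.1

section Cohomology

variable [DecidableEq V] [LinearOrder V]

lemma bdry_single (K : SComplex V) (n : ℤ) (σ : K.Face n) (c : ℤ) :
    K.bdry n (Finsupp.single σ c) = c • K.bdryElem n σ := by
  simp [bdry]

lemma cobdry_apply (K : SComplex V) (n : ℤ) (g : K.chainZ n →ₗ[ℤ] ℤ) (x : K.chainZ (n + 1)) :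
    K.cobdry n g x = g (K.chainCast (by ring) (K.bdry (n + 1) x)) :=
  rfl

lemma bdryElem_of_eq_singleton (K : SComplex V) (n : ℤ) (σ : K.Face n) {v : V}
    (hσ : σ.1 = {v}) :
    K.bdryElem n σ = Finsupp.single
      ⟨∅, K.empty_mem, by have := σ.2.2; rw [hσ] at this; simp at this ⊢; omega⟩ 1 := by
  rw [bdryElem, sum_fin_cast (by rw [hσ, Finset.card_singleton]), Fin.sum_univ_one]
  have hsort : σ.1.sort (· ≤ ·) = [v] := by rw [hσ, Finset.sort_singleton]
  simp only [Fin.val_cast, Fin.val_zero, pow_zero, one_smul, List.get_eq_getElem, hsort,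
    List.getElem_cons_zero]
  exact single_congr (by rw [hσ, Finset.erase_singleton]) _ _ 1

lemma bdryElem_of_eq_pair (K : SComplex V) (n : ℤ) (σ : K.Face n) {a b : V} (hab : a < b)
    (hσ : σ.1 = {a, b}) :
    K.bdryElem n σ =
      Finsupp.single ⟨{b}, K.down_closed σ.2.1 (by simp [hσ]),
        by have := σ.2.2; rw [hσ, Finset.card_pair hab.ne] at this; simp; omega⟩ 1 -
      Finsupp.single ⟨{a}, K.down_closed σ.2.1 (by simp [hσ]),
        by have := σ.2.2; rw [hσ, Finset.card_pair hab.ne] at this; simp; omega⟩ 1 := by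
  rw [bdryElem, sum_fin_cast (by rw [hσ, Finset.card_pair hab.ne]), Fin.sum_univ_two]
  have hsort : σ.1.sort (· ≤ ·) = [a, b] := by
    rw [hσ, Finset.sort_insert (r := (· ≤ ·)) (by simpa using hab.le) (by simpa using hab.ne),
      Finset.sort_singleton]
  simp only [Fin.val_cast, Fin.val_zero, Fin.val_one, pow_zero, pow_one, one_smul, neg_smul,
    List.get_eq_getElem, hsort, List.getElem_cons_zero, List.getElem_cons_succ, ← sub_eq_add_neg]
  congr 1
  · exact single_congr (by rw [hσ, Finset.erase_insert (by simpa using hab.ne)]) _ _ 1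
  · exact single_congr
      (by rw [hσ, Finset.pair_comm, Finset.erase_insert (by simpa using hab.ne')]) _ _ 1

lemma reducedCohomology_subsingleton_iff (K : SComplex V) (n : ℤ) :
    Subsingleton (K.reducedCohomology n) ↔ K.cocycles n ≤ K.cobdries n := by
  rw [Submodule.Quotient.subsingleton_iff, Submodule.comap_subtype_eq_top]
  exact ⟨fun h => h.trans inf_le_left, fun h => le_inf h le_rfl⟩

lemma mem_cobdries_zero_iff (K : SComplex V) (f : K.chainZ 0 →ₗ[ℤ] ℤ) :
    f ∈ K.cobdries 0 ↔ ∃ c, ∀ σ : K.Face 0, f (Finsupp.single σ 1) = c := by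
  have coboundary_apply_vertex : ∀ (g : K.chainZ (0 - 1) →ₗ[ℤ] ℤ) (σ : K.Face 0),
      LinearEquiv.arrowCongr (K.chainCast (by ring)) (LinearEquiv.refl ℤ ℤ)
        (K.cobdry (0 - 1) g) (Finsupp.single σ 1) =
      g (Finsupp.single ⟨∅, K.empty_mem, by simp⟩ 1) := by
    intro g σ
    obtain ⟨v, hv⟩ := Face.exists_eq_singleton σ
    rw [LinearEquiv.arrowCongr_apply, LinearEquiv.refl_apply, chainCast_symm_s15, chainCast_single,
      cobdry_apply, bdry_single, one_smul,
      bdryElem_of_eq_singleton K (0 - 1 + 1) ⟨σ.1, σ.2.1, by rw [σ.2.2]; ring⟩ hv, chainCast_single]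
  constructor
  · rintro ⟨_, ⟨g, rfl⟩, rfl⟩
    exact ⟨_, coboundary_apply_vertex g⟩
  · rintro ⟨c, hc⟩
    refine ⟨_, LinearMap.mem_range_self _ (c • Finsupp.lapply ⟨∅, K.empty_mem, by simp⟩), ?_⟩
    ext σ
    simp only [LinearMap.comp_apply, Finsupp.lsingle_apply, LinearEquiv.coe_coe]
    rw [coboundary_apply_vertex, hc]
    simp

lemma cobdry_eq_zero_of_isEmpty (K : SComplex V) (n : ℤ) [IsEmpty (K.Face (n + 1))]
    (f : K.chainZ n →ₗ[ℤ] ℤ) : K.cobdry n f = 0 := by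
  ext σ
  exact isEmptyElim σ

lemma cocycle_apply_vertex_eq (K : SComplex V) {f : K.chainZ 0 →ₗ[ℤ] ℤ} (hf : f ∈ K.cocycles 0)
    {a b : V} (hab : a ≠ b) (hedge : {a, b} ∈ K.faces) :
    f (Finsupp.single (K.vertex a (K.down_closed hedge (by simp))) 1) =
      f (Finsupp.single (K.vertex b (K.down_closed hedge (by simp))) 1) := by
  wlog hlt : a < b generalizing a b
  · rw [Finset.pair_comm] at hedge
    exact (this hab.symm hedge (hab.symm.lt_of_le (not_lt.mp hlt))).symm
  have hz :
      K.cobdry 0 f (Finsupp.single ⟨{a, b}, hedge, by simp [Finset.card_pair hab]⟩ 1) = 0 := by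
    rw [LinearMap.mem_ker.mp hf, LinearMap.zero_apply]
  rw [cobdry_apply, bdry_single, one_smul, bdryElem_of_eq_pair _ _ _ hlt rfl, map_sub, map_sub,
    chainCast_single, chainCast_single, sub_eq_zero] at hz
  exact hz.symm

theorem subsingleton_reducedCohomology_zero_full_pair_iff (K : SComplex V) {a b : V} (hab : a ≠ b)
    (ha : {a} ∈ K.faces) (hb : {b} ∈ K.faces) :
    Subsingleton ((K.full {a, b}).reducedCohomology 0) ↔ {a, b} ∈ K.faces := by
  rw [reducedCohomology_subsingleton_iff]
  constructor
  · intro hle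
    by_contra hedge
    have := isEmpty_full_pair_face_one K hedge
    let f := Finsupp.lapply (R := ℤ) (M := ℤ) ((K.full {a, b}).vertex a ⟨ha, by simp⟩)
    obtain ⟨c, hc⟩ := (mem_cobdries_zero_iff _ f).mp (hle (cobdry_eq_zero_of_isEmpty _ 0 f))
    have hfa := hc ((K.full {a, b}).vertex a ⟨ha, by simp⟩)
    have hfb := hc ((K.full {a, b}).vertex b ⟨hb, by simp⟩)
    simp [f, vertex, hab] at hfa hfb
    omega
  · intro hedge f hf
    have hfab := cocycle_apply_vertex_eq _ hf hab
      (show {a, b} ∈ (K.full {a, b}).faces from ⟨hedge, subset_rfl⟩)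
    refine (mem_cobdries_zero_iff _ f).mpr
      ⟨f (Finsupp.single ((K.full {a, b}).vertex a ⟨ha, by simp⟩) 1), fun σ => ?_⟩
    obtain ⟨v, hv⟩ := Face.exists_eq_singleton σ
    obtain rfl | rfl : v = a ∨ v = b := by simpa using σ.2.1.2 (hv ▸ Finset.mem_singleton_self v)
    · exact congrArg (fun τ => f (Finsupp.single τ 1)) (Subtype.ext hv)
    · exact (congrArg (fun τ => f (Finsupp.single τ 1)) (Subtype.ext hv)).trans hfab.symm

end Cohomology

end Paper.SComplex

lemma mem_Kpaper_faces_iff (s : Finset ℕ) : s ∈ Kpaper.faces ↔ ∃ t ∈ tetraList, s ⊆ t :=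
  Iff.rfl

lemma singleton_mem_Kpaper_faces : ∀ v ∈ Kpaper.vertexSet, {v} ∈ Kpaper.faces := by
  simp only [mem_Kpaper_faces_iff]
  decide

lemma pair_mem_Kpaper_faces_iff : ∀ a ∈ Kpaper.vertexSet, ∀ b ∈ Kpaper.vertexSet, a ≠ b →
    ({a, b} ∈ Kpaper.faces ↔ ¬({a, b} = ({5, 6} : Finset ℕ) ∨ {a, b} = ({7, 8} : Finset ℕ))) := by
  simp only [mem_Kpaper_faces_iff]
  decide

theorem stmt15 (I : Finset ℕ) (hI : I ⊆ Kpaper.vertexSet) (hcard : I.card = 2) :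
    ¬ Subsingleton ((Kpaper.full I).reducedCohomology 0) ↔ (I = {5, 6} ∨ I = {7, 8}) := by
  obtain ⟨a, b, hab, rfl⟩ := Finset.card_eq_two.mp hcard
  have ha : a ∈ Kpaper.vertexSet := hI (by simp)
  have hb : b ∈ Kpaper.vertexSet := hI (by simp)
  rw [Paper.SComplex.subsingleton_reducedCohomology_zero_full_pair_iff Kpaper hab
    (singleton_mem_Kpaper_faces a ha) (singleton_mem_Kpaper_faces b hb),
    pair_mem_Kpaper_faces_iff a ha b hb hab, not_not]
end
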